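/- Weight identity for the tree-reversal bijection: for T ∈ Θ_i and the bijection Φ_{i,j}: Θ_i → Θ_j obtained by reversing the unique tree path T_j from j to i, one has q(Φ_{i,j}(T)) = exp(-S(T_j)) · q(T). -/

import Mathlib

open Finset

attribute [local instance] Classical.propDecidable

/-- `i → j` is an edge of the graph when its label is positive. -/
def IsEdge {n : ℕ} (ℓ : Fin n → Fin n → ℝ) (i j : Fin n) : Prop := 0 < ℓ i j

/-- Strong connectivity: any two vertices are joined by a directed path of edges. -/
def StronglyConnected {n : ℕ} (ℓ : Fin n → Fin n → ℝ) : Prop :=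
  ∀ i j : Fin n, Relation.ReflTransGen (IsEdge ℓ) i j

/-- Reversibility: `i → j` is an edge iff `j → i` is. -/
def Reversible {n : ℕ} (ℓ : Fin n → Fin n → ℝ) : Prop :=
  ∀ i j : Fin n, 0 < ℓ i j ↔ 0 < ℓ j i

/-- The Laplacian matrix: `L j i = ℓ i j` off the diagonal,
`L i i = -∑_{k ≠ i} ℓ i k`. -/
noncomputable def labelLaplacian {n : ℕ} (ℓ : Fin n → Fin n → ℝ) :
    Matrix (Fin n) (Fin n) ℝ :=
  fun j i => if j = i then -∑ k ∈ univ.filter (· ≠ i), ℓ i k else ℓ i j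

/-- A spanning tree rooted at `r`, encoded as a parent map `t`: the root is fixed,
every other vertex has a positively-labelled edge to its parent, and iterating
the parent map from any vertex reaches the root. -/
def IsSpanningTree {n : ℕ} (ℓ : Fin n → Fin n → ℝ) (r : Fin n)
    (t : Fin n → Fin n) : Prop :=
  t r = r ∧ (∀ v, v ≠ r → 0 < ℓ v (t v)) ∧ ∀ v, ∃ k, t^[k] v = r

/-- `Θ_r`: the set of spanning trees rooted at `r`. -/
noncomputable def Trees {n : ℕ} (ℓ : Fin n → Fin n → ℝ) (r : Fin n) :
    Finset (Fin n → Fin n) :=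
  univ.filter (IsSpanningTree ℓ r)

/-- `q(T)`: the product of the edge labels over the edges of the tree. -/
noncomputable def treeWeight {n : ℕ} (ℓ : Fin n → Fin n → ℝ) (r : Fin n)
    (t : Fin n → Fin n) : ℝ :=
  ∏ v ∈ univ.filter (· ≠ r), ℓ v (t v)

/-- A directed path from `i` to `j`, as the list of visited vertices. -/
def IsPathFrom {n : ℕ} (ℓ : Fin n → Fin n → ℝ) (i j : Fin n)
    (p : List (Fin n)) : Prop :=
  p.Chain' (IsEdge ℓ) ∧ p.head? = some i ∧ p.getLast? = some j

/-- A minimal (self-avoiding) path from `i` to `j`: all vertices distinct. -/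
def IsMinPathFrom {n : ℕ} (ℓ : Fin n → Fin n → ℝ) (i j : Fin n)
    (p : List (Fin n)) : Prop :=
  IsPathFrom ℓ i j p ∧ p.Nodup

/-- `S(P)`: the action / entropy change of a path, the sum of
`log (ℓ(a→b)/ℓ(b→a))` over its consecutive pairs `a → b`. -/
noncomputable def pathAction {n : ℕ} (ℓ : Fin n → Fin n → ℝ)
    (p : List (Fin n)) : ℝ :=
  ((p.zip p.tail).map (fun e => Real.log (ℓ e.1 e.2 / ℓ e.2 e.1))).sum

/-- `q(P)`: the product of the labels over the edges of a path. -/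
noncomputable def pathWeight {n : ℕ} (ℓ : Fin n → Fin n → ℝ)
    (p : List (Fin n)) : ℝ :=
  ((p.zip p.tail).map (fun e => ℓ e.1 e.2)).prod

/-- The path from `i` to the root `r` along the parent map `t` (fuel `k`). -/
def treePathAux {n : ℕ} (t : Fin n → Fin n) (r : Fin n) :
    ℕ → Fin n → List (Fin n)
  | 0, i => [i]
  | k + 1, i => if i = r then [i] else i :: treePathAux t r k (t i)

/-- `T_i`: the unique path from `i` to the root `r` on the spanning tree `t`. -/
def treePath {n : ℕ} (t : Fin n → Fin n) (r : Fin n) (i : Fin n) :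
    List (Fin n) :=
  treePathAux t r n i

/-- The cycle condition: `S(C) = 0` for every directed cycle `C`
(a directed path whose first and last vertices agree). -/
def CycleCondition {n : ℕ} (ℓ : Fin n → Fin n → ℝ) : Prop :=
  ∀ p : List (Fin n), p.Chain' (IsEdge ℓ) → p.head? = p.getLast? →
    pathAction ℓ p = 0

/-- The tree-reversal map `Φ_{r,j}`: given a tree `t` rooted at `r`, reverse the
edges on the unique tree path from `j` to `r`, obtaining a tree rooted at `j`. -/
def reverseTree {n : ℕ} (t : Fin n → Fin n) (r j : Fin n) : Fin n → Fin n :=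
  fun v =>
    (((treePath t r j).zip (treePath t r j).tail).find? (fun e => e.2 == v)).elim
      (if v = j then j else t v) (fun e => e.1)

/-!
The tree path from `j` to the root `i` is the orbit `j, T j, …, T^[k] j = i`, where `k` is the
first hitting time of `i`; up to time `k` the orbit is injective. Reversing the path changes the
parent map only at the path vertices, so `q(Φ T)` and `q(T)` share the factor over the vertices
off the path, while on the path the forward labels `ℓ(a → b)` are traded for the backward ones
`ℓ(b → a)`. By reversibility both are positive, so the product of the ratios
`ℓ(b → a) / ℓ(a → b)` is `exp (-S(T_j))`.
-/

section Orbit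

variable {α : Type*} {T : α → α} {v r : α} {k : ℕ}

theorem iterate_injOn_Iic_of_first_hit (hk : T^[k] v = r) (hmin : ∀ m < k, T^[m] v ≠ r) :
    Set.InjOn (fun a => T^[a] v) (Set.Iic k) := by
  intro a ha b hb hab
  by_contra hne
  wlog hlt : a < b generalizing a b
  · exact this hb ha hab.symm (Ne.symm hne) (by omega)
  -- the orbit repeats with period `b - a`, so it hits `r` already at time `k - (b - a)`
  refine hmin (k - b + a) (by simp only [Set.mem_Iic] at hb; omega) ?_
  have hb' : k - b + b = k := Nat.sub_add_cancel hb
  simp only at hab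
  rw [Function.iterate_add_apply, hab, ← Function.iterate_add_apply, hb', hk]

theorem lt_card_of_first_hit [Fintype α] (hk : T^[k] v = r) (hmin : ∀ m < k, T^[m] v ≠ r) :
    k < Fintype.card α := by
  have hinj : Function.Injective fun a : Fin (k + 1) => T^[a] v := fun a b hab =>
    Fin.ext (iterate_injOn_Iic_of_first_hit hk hmin (Nat.lt_succ_iff.mp a.2)
      (Nat.lt_succ_iff.mp b.2) hab)
  simpa using Fintype.card_le_of_injective _ hinj

end Orbit

theorem List.zip_tail_map_range {α : Type*} (f : ℕ → α) (k : ℕ) :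
    ((List.range (k + 1)).map f).zip ((List.range (k + 1)).map f).tail =
      (List.range k).map fun a => (f a, f (a + 1)) :=
  List.ext_getElem (by simp) fun _ _ _ => by simp

theorem List.find?_snd_eq_some {α β : Type*} [DecidableEq β] {E : List (α × β)}
    (hE : (E.map Prod.snd).Nodup) {e : α × β} (he : e ∈ E) :
    E.find? (fun x => x.2 == e.2) = some e := by
  obtain ⟨e', he'⟩ := Option.isSome_iff_exists.mp
    (List.find?_isSome (p := fun x => x.2 == e.2) |>.mpr ⟨e, he, beq_self_eq_true e.2⟩)
  have hsnd : e'.2 = e.2 := by simpa using List.find?_some he'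
  rwa [List.inj_on_of_nodup_map hE (List.mem_of_find?_eq_some he') he hsnd] at he'

theorem exp_neg_pathAction_mul_pathWeight {n : ℕ} {ℓ : Fin n → Fin n → ℝ} {p : List (Fin n)}
    (hpos : ∀ e ∈ p.zip p.tail, 0 < ℓ e.1 e.2 ∧ 0 < ℓ e.2 e.1) :
    Real.exp (-pathAction ℓ p) * pathWeight ℓ p = pathWeight (fun a b => ℓ b a) p := by
  unfold pathAction pathWeight
  generalize p.zip p.tail = E at hpos ⊢
  induction E with
  | nil => simp
  | cons e E ih =>
    obtain ⟨h₁, h₂⟩ := hpos e (List.mem_cons_self ..)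
    simp only [List.map_cons, List.sum_cons, List.prod_cons, neg_add, Real.exp_add,
      Real.exp_neg, Real.exp_log (div_pos h₁ h₂)]
    rw [← ih fun e' he' => hpos e' (List.mem_cons_of_mem _ he'), Real.exp_neg]
    field_simp

theorem treeWeight_eq_prod_compl_mul_prod_range {n : ℕ} (ℓ : Fin n → Fin n → ℝ)
    (g : Fin n → Fin n) {r : Fin n} {f : ℕ → Fin n} {k : ℕ} (hf : Set.InjOn f (Set.Iic k))
    (hr : r ∈ (range (k + 1)).image f) :
    treeWeight ℓ r g = (∏ v ∈ ((range (k + 1)).image f)ᶜ, ℓ v (g v)) *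
      ∏ b ∈ range (k + 1), if f b ≠ r then ℓ (f b) (g (f b)) else 1 := by
  have hf' : Set.InjOn f (range (k + 1)) := hf.mono fun a ha => by
    simpa [Nat.lt_succ_iff] using ha
  rw [treeWeight, prod_filter, ← prod_compl_mul_prod ((range (k + 1)).image f), prod_image hf']
  congr 1
  refine prod_congr rfl fun v hv => if_pos fun hvr => ?_
  exact (mem_compl.mp hv) (hvr ▸ hr)

theorem treePathAux_eq_map_range {n : ℕ} {T : Fin n → Fin n} {i v : Fin n} {k fuel : ℕ}
    (hfuel : k ≤ fuel) (hk : T^[k] v = i) (hmin : ∀ m < k, T^[m] v ≠ i) :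
    treePathAux T i fuel v = (List.range (k + 1)).map fun a => T^[a] v := by
  induction fuel generalizing k v with
  | zero =>
    obtain rfl : k = 0 := by omega
    simp [treePathAux]
  | succ fuel ih =>
    by_cases hv : v = i
    · obtain rfl : k = 0 := by
        by_contra hk0
        exact hmin 0 (by omega) hv
      simp [treePathAux, hv]
    · obtain ⟨k, rfl⟩ : ∃ k', k = k' + 1 :=
        Nat.exists_eq_succ_of_ne_zero (by rintro rfl; exact hv hk)
      have hk' : T^[k] (T v) = i := by rwa [← Function.iterate_succ_apply]
      have hmin' : ∀ m < k, T^[m] (T v) ≠ i := fun m hm => by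
        rw [← Function.iterate_succ_apply]; exact hmin (m + 1) (by omega)
      rw [treePathAux, if_neg hv, ih (by omega) hk' hmin', List.range_succ_eq_map]
      simp [Function.comp_def, Function.iterate_succ_apply]

section TreePath

variable {n : ℕ} {T : Fin n → Fin n} {i j : Fin n} {k : ℕ}
  (hk : T^[k] j = i) (hmin : ∀ m < k, T^[m] j ≠ i)
include hk hmin

theorem treePath_eq_map_range :
    treePath T i j = (List.range (k + 1)).map fun a => T^[a] j :=
  treePathAux_eq_map_range (by simpa using (lt_card_of_first_hit hk hmin).le) hk hmin

theorem zip_treePath_tail :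
    (treePath T i j).zip (treePath T i j).tail =
      (List.range k).map fun a => (T^[a] j, T^[a + 1] j) := by
  rw [treePath_eq_map_range hk hmin, List.zip_tail_map_range]

theorem reverseTree_iterate_succ {b : ℕ} (hb : b < k) :
    reverseTree T i j (T^[b + 1] j) = T^[b] j := by
  have hnodup : (((List.range k).map fun a => (T^[a] j, T^[a + 1] j)).map Prod.snd).Nodup := by
    rw [List.map_map]
    refine (List.nodup_range).map_on fun a ha c hc hac => ?_
    have := iterate_injOn_Iic_of_first_hit hk hmin (x₁ := a + 1) (x₂ := c + 1)
      (List.mem_range.mp ha) (List.mem_range.mp hc) hac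
    omega
  have hmem : (T^[b] j, T^[b + 1] j) ∈ (List.range k).map fun a => (T^[a] j, T^[a + 1] j) :=
    List.mem_map.mpr ⟨b, List.mem_range.mpr hb, rfl⟩
  simp only [reverseTree, zip_treePath_tail hk hmin]
  rw [List.find?_snd_eq_some hnodup hmem]
  rfl

theorem reverseTree_of_forall_ne {v : Fin n} (hv : ∀ a ≤ k, T^[a] j ≠ v) :
    reverseTree T i j v = T v := by
  have hnone : ((List.range k).map fun a => (T^[a] j, T^[a + 1] j)).find?
      (fun e => e.2 == v) = none := by
    simp only [List.find?_eq_none, List.mem_map, List.mem_range]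
    rintro _ ⟨a, ha, rfl⟩
    simpa using hv (a + 1) ha
  simp only [reverseTree, zip_treePath_tail hk hmin, hnone, Option.elim]
  rw [if_neg fun hvj => hv 0 (Nat.zero_le k) hvj.symm]

theorem toFinset_treePath :
    (treePath T i j).toFinset = (range (k + 1)).image fun a => T^[a] j := by
  ext v
  simp only [treePath_eq_map_range hk hmin, List.mem_toFinset, List.mem_map, List.mem_range,
    mem_image, mem_range]

theorem pathWeight_treePath (ℓ : Fin n → Fin n → ℝ) :
    pathWeight ℓ (treePath T i j) = ∏ b ∈ range k, ℓ (T^[b] j) (T^[b + 1] j) := by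
  rw [pathWeight, zip_treePath_tail hk hmin, List.map_map]
  simp only [prod_eq_multiset_prod, range_val, Multiset.range, Multiset.map_coe,
    Multiset.prod_coe, Function.comp_def]

theorem treeWeight_eq_prod_compl_mul_pathWeight (ℓ : Fin n → Fin n → ℝ) :
    treeWeight ℓ i T =
      (∏ v ∈ (treePath T i j).toFinsetᶜ, ℓ v (T v)) * pathWeight ℓ (treePath T i j) := by
  rw [toFinset_treePath hk hmin, pathWeight_treePath hk hmin,
    treeWeight_eq_prod_compl_mul_prod_range ℓ T (iterate_injOn_Iic_of_first_hit hk hmin)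
      (mem_image.mpr ⟨k, self_mem_range_succ k, hk⟩),
    prod_range_succ, if_neg (not_not.mpr hk), mul_one]
  refine congrArg _ (prod_congr rfl fun b hb => ?_)
  rw [if_pos (hmin b (mem_range.mp hb)), Function.iterate_succ_apply']

theorem treeWeight_reverseTree (ℓ : Fin n → Fin n → ℝ) :
    treeWeight ℓ j (reverseTree T i j) =
      (∏ v ∈ (treePath T i j).toFinsetᶜ, ℓ v (T v)) *
        pathWeight (fun a b => ℓ b a) (treePath T i j) := by
  have hinj := iterate_injOn_Iic_of_first_hit hk hmin
  rw [toFinset_treePath hk hmin, pathWeight_treePath hk hmin,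
    treeWeight_eq_prod_compl_mul_prod_range ℓ _ (r := j) hinj
      (mem_image.mpr ⟨0, mem_range.mpr k.succ_pos, rfl⟩),
    prod_range_succ', Function.iterate_zero_apply, if_neg (not_not.mpr rfl), mul_one]
  congr 1
  · refine prod_congr rfl fun v hv => ?_
    rw [reverseTree_of_forall_ne hk hmin fun a ha hav => mem_compl.mp hv
      (mem_image.mpr ⟨a, mem_range.mpr (Nat.lt_succ_of_le ha), hav⟩)]
  · refine prod_congr rfl fun b hb => ?_
    have hb := mem_range.mp hb
    have hne : T^[b + 1] j ≠ j := fun h =>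
      b.succ_ne_zero (hinj (Set.mem_Iic.mpr hb) (Set.mem_Iic.mpr k.zero_le) h)
    rw [if_pos hne, reverseTree_iterate_succ hk hmin hb]

end TreePath

theorem reverseTree_weight_general {n : ℕ} (ℓ : Fin n → Fin n → ℝ)
    (hrev : Reversible ℓ)
    (i j : Fin n) (T : Fin n → Fin n) (hT : T ∈ Trees ℓ i) :
    treeWeight ℓ j (reverseTree T i j) =
      Real.exp (-pathAction ℓ (treePath T i j)) * treeWeight ℓ i T := by
  obtain ⟨-, -, hedge, hreach⟩ := mem_filter.mp hT
  have hk := Nat.find_spec (hreach j)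
  have hmin : ∀ m < Nat.find (hreach j), T^[m] j ≠ i := fun m => Nat.find_min (hreach j)
  have hpos : ∀ e ∈ (treePath T i j).zip (treePath T i j).tail,
      0 < ℓ e.1 e.2 ∧ 0 < ℓ e.2 e.1 := by
    simp only [zip_treePath_tail hk hmin, List.mem_map, List.mem_range]
    rintro _ ⟨b, hb, rfl⟩
    have hfwd := hedge _ (hmin b hb)
    rw [← Function.iterate_succ_apply' T b j] at hfwd
    exact ⟨hfwd, (hrev _ _).mp hfwd⟩
  rw [treeWeight_reverseTree hk hmin, treeWeight_eq_prod_compl_mul_pathWeight hk hmin,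
    ← exp_neg_pathAction_mul_pathWeight hpos]
  ring

/-- Weight identity for the tree-reversal bijection:
`q(Φ_{i,j}(T)) = exp (-S(T_j)) · q(T)`. -/
theorem reverseTree_weight {n : ℕ} (ℓ : Fin n → Fin n → ℝ)
    (hℓ : ∀ i j, 0 ≤ ℓ i j) (hsc : StronglyConnected ℓ) (hrev : Reversible ℓ)
    (i j : Fin n) (hij : i ≠ j) (T : Fin n → Fin n) (hT : T ∈ Trees ℓ i) :
    treeWeight ℓ j (reverseTree T i j) =
      Real.exp (-pathAction ℓ (treePath T i j)) * treeWeight ℓ i T :=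
  reverseTree_weight_general ℓ hrev i j T hT
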